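/- arXiv:2205.09819 — 5 statements merged into one kernel-verified Lean document; each statement's English description precedes it below -/
import Mathlib

section
/- Let φ be a quadratic form over a field K of characteristic not 2, and let a ∈ K* be an element represented by φ. Then the multiplicative group N_K(φ) generated by products of pairs of values represented by φ equals the multiplicative group T_K(aφ) generated by the values represented by the scaled form aφ. -/
open scoped TensorProduct

noncomputable section

/-- Nonzero values represented by a quadratic form, as a subset of the field. -/
def Dv {K V : Type*} [Field K] [AddCommGroup V] [Module K V]
    (Q : QuadraticForm K V) : Set K :=
  {a | a ≠ 0 ∧ ∃ v, Q v = a}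

/-- Values represented by a quadratic form, as a set of units. -/
def Dunits {K V : Type*} [Field K] [AddCommGroup V] [Module K V]
    (Q : QuadraticForm K V) : Set Kˣ :=
  {u | ∃ v, Q v = (u : K)}

/-- `T_K(Q)`: the subgroup of `Kˣ` generated by the values represented by `Q`. -/
def Tgrp {K V : Type*} [Field K] [AddCommGroup V] [Module K V]
    (Q : QuadraticForm K V) : Subgroup Kˣ :=
  Subgroup.closure (Dunits Q)

/-- `N_K(Q)`: the subgroup of `Kˣ` generated by products of two represented values. -/
def Ngrp {K V : Type*} [Field K] [AddCommGroup V] [Module K V]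
    (Q : QuadraticForm K V) : Subgroup Kˣ :=
  Subgroup.closure {u : Kˣ | ∃ a b : Kˣ, a ∈ Dunits Q ∧ b ∈ Dunits Q ∧ u = a * b}

/-- if `a` is represented by `φ`, then `N_K(φ) = T_K(aφ)`. -/
theorem stmt_0 {K V : Type*} [Field K] (h2 : (2 : K) ≠ 0)
    [AddCommGroup V] [Module K V] (φ : QuadraticForm K V)
    (a : Kˣ) (ha : a ∈ Dunits φ) :
    Ngrp φ = Tgrp ((a : K) • φ) := by
  obtain ⟨x, hx⟩ := ha
  apply le_antisymm
  · rw [Ngrp, Subgroup.closure_le]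
    rintro u ⟨b, c, ⟨v, hv⟩, ⟨w, hw⟩, rfl⟩
    have hab : (a * b) ∈ Dunits ((a : K) • φ) := ⟨v, by simp [hv]⟩
    have hac : (a * c) ∈ Dunits ((a : K) • φ) := ⟨w, by simp [hw]⟩
    have haa : (a * a) ∈ Dunits ((a : K) • φ) := ⟨x, by simp [hx]⟩
    have key : b * c = (a * b) * (a * c) * (a * a)⁻¹ := by
      ext
      push_cast
      field_simp
    rw [key]
    exact mul_mem (mul_mem (Subgroup.subset_closure hab)
      (Subgroup.subset_closure hac)) (inv_mem (Subgroup.subset_closure haa))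
  · rw [Tgrp, Subgroup.closure_le]
    rintro u ⟨v, hv⟩
    refine Subgroup.subset_closure ⟨a, a⁻¹ * u, ⟨x, hx⟩, ⟨v, ?_⟩, by group⟩
    have : (a : K) * φ v = (u : K) := by simpa using hv
    push_cast
    field_simp
    linear_combination this

end
end

section
/- Let K = K₀((X))((Y)) be the iterated Laurent series field over a field K₀ of characteristic not 2, and let φ = ⟨X, Y, XY⟩ (the diagonal quadratic form X·u² + Y·v² + XY·w²). Then 1 is not represented by φ over K, yet T_K(φ) = N_K(φ) = K*² ∪ XK*² ∪ YK*² ∪ XYK*². -/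
/-!
Let `v` be the rank-two valuation of `K = K₀((X))((Y))` (the `Y`-adic order, then the `X`-adic
order of the leading coefficient, compared lexicographically) and `ℓ(f) ∈ K₀` the matching
leading coefficient. By Hensel's lemma a power series with constant term `1` is a square, so a
nonzero `f` lies in `K*² ∪ XK*² ∪ YK*² ∪ XYK*²` exactly when `ℓ(f)` is a square; in particular
these elements form a subgroup.

The summands `Xu²`, `Yv²`, `XYw²` of a value of `φ` have `v ≡ (0,1), (1,0), (1,1) mod 2`, so their
valuations are pairwise distinct and the sum has the leading term of one of them. Hence every
nonzero value of `φ` has `ℓ` a square and `v ≢ (0,0) mod 2`. The second fact excludes the value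
`1`; the first puts `T_K(φ)` into the subgroup above, each element of which is a product of two
values of `φ`, e.g. `XYc² = Xc² · Y` and `c² = Xc² · X(X⁻¹)²`.
-/

open scoped TensorProduct

noncomputable section

variable (K₀ : Type*) [Field K₀]

/-- The iterated Laurent series field `K₀((X))((Y))`. -/
def LK (K₀ : Type*) [Field K₀] : Type _ := LaurentSeries (LaurentSeries K₀)

noncomputable instance : Field (LK K₀) :=
  inferInstanceAs (Field (LaurentSeries (LaurentSeries K₀)))

/-- The element `X` of `K₀((X))((Y))`. -/
def elX : LK K₀ := HahnSeries.C (HahnSeries.single (1 : ℤ) (1 : K₀))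

/-- The element `Y` of `K₀((X))((Y))`. -/
def elY : LK K₀ := HahnSeries.single (1 : ℤ) (1 : LaurentSeries K₀)

/-- The diagonal form `⟨X, Y, XY⟩` over `K₀((X))((Y))`. -/
def phiXY : QuadraticForm (LK K₀) (Fin 3 → LK K₀) :=
  QuadraticMap.weightedSumSquares (LK K₀) ![elX K₀, elY K₀, elX K₀ * elY K₀]

open HahnSeries

namespace HahnSeries

variable {Γ Γ' R : Type*}

theorem order_eq_of_orderTop_eq [PartialOrder Γ] [Zero Γ] [Zero R] {x y : HahnSeries Γ R}
    (hx : x ≠ 0) (h : x.orderTop = y.orderTop) : x.order = y.order := by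
  have hy : y ≠ 0 := by rwa [← orderTop_ne_top, ← h, orderTop_ne_top]
  rw [← order_eq_orderTop_of_ne_zero hx, ← order_eq_orderTop_of_ne_zero hy] at h
  exact_mod_cast h

theorem orderTop_add_and_leadingCoeff_add_of_orderTop_eq [LinearOrder Γ] [Zero Γ] [AddMonoid R]
    {x y : HahnSeries Γ R} (h : x.orderTop = y.orderTop)
    (hxy : x.leadingCoeff + y.leadingCoeff ≠ 0) :
    (x + y).orderTop = x.orderTop ∧ (x + y).leadingCoeff = x.leadingCoeff + y.leadingCoeff := by
  have hx : x ≠ 0 := by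
    rintro rfl
    rw [orderTop_zero, eq_comm, orderTop_eq_top] at h
    simp [h] at hxy
  have hcoeff : (x + y).coeff x.order = x.leadingCoeff + y.leadingCoeff := by
    rw [coeff_add, leadingCoeff_eq, leadingCoeff_eq, order_eq_of_orderTop_eq hx h]
  have htop : (x + y).orderTop = x.orderTop := by
    refine le_antisymm ?_ (le_of_eq_of_le (by rw [h, min_self]) min_orderTop_le_orderTop_add)
    rw [← order_eq_orderTop_of_ne_zero hx]
    exact orderTop_le_of_coeff_ne_zero (hcoeff ▸ hxy)
  have hne : x + y ≠ 0 := by rwa [← orderTop_ne_top, htop, orderTop_ne_top]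
  rw [leadingCoeff_eq, order_eq_of_orderTop_eq hne htop, hcoeff]
  exact ⟨htop, rfl⟩

theorem leadingCoeff_leadingCoeff_add_eq_left [LinearOrder Γ] [Zero Γ] [LinearOrder Γ']
    [Zero Γ'] [AddMonoid R] {x y : HahnSeries Γ (HahnSeries Γ' R)}
    (h : toLex (x.orderTop, x.leadingCoeff.orderTop) <
      toLex (y.orderTop, y.leadingCoeff.orderTop)) :
    (x + y).orderTop = x.orderTop ∧ (x + y).leadingCoeff.orderTop = x.leadingCoeff.orderTop ∧
      (x + y).leadingCoeff.leadingCoeff = x.leadingCoeff.leadingCoeff := by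
  rcases Prod.Lex.toLex_lt_toLex.1 h with h | ⟨h, hlc⟩
  · rw [orderTop_add_eq_left h, leadingCoeff_add_eq_left h]
    exact ⟨rfl, rfl, rfl⟩
  · have hsum : x.leadingCoeff + y.leadingCoeff ≠ 0 := by
      rw [← orderTop_ne_top, orderTop_add_eq_left hlc]
      exact hlc.ne_top
    obtain ⟨htop, hlead⟩ := orderTop_add_and_leadingCoeff_add_of_orderTop_eq h hsum
    rw [htop, hlead, orderTop_add_eq_left hlc, leadingCoeff_add_eq_left hlc]
    exact ⟨rfl, rfl, rfl⟩

end HahnSeries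

theorem PowerSeries.isSquare_of_constantCoeff_eq_one {R : Type*} [CommRing R]
    (h2 : IsUnit (2 : R)) {P : PowerSeries R} (hP : constantCoeff P = 1) : IsSquare P := by
  have h2' : IsUnit (2 : PowerSeries R) := by
    simpa only [map_ofNat] using h2.map (C (R := R))
  obtain ⟨a, ha, -⟩ := HenselianRing.is_henselian (I := Ideal.span {X})
    (Polynomial.X ^ 2 - Polynomial.C P) (Polynomial.monic_X_pow_sub_C P two_ne_zero) 1
    (by simp [Ideal.mem_span_singleton, X_dvd_iff, hP])
    (by simpa [one_add_one_eq_two] using h2'.map (Ideal.Quotient.mk _))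
  exact ⟨a, (sub_eq_zero.1 (by simpa [sq] using ha)).symm⟩

namespace LaurentSeries

variable {F : Type*} [Field F]

theorem exists_eq_single_mul_sq (h2 : (2 : F) ≠ 0) (f : LaurentSeries F) :
    ∃ c : LaurentSeries F, f = single f.order f.leadingCoeff * c ^ 2 := by
  rcases eq_or_ne f 0 with rfl | hf
  · exact ⟨0, by simp⟩
  have ha : f.leadingCoeff ≠ 0 := leadingCoeff_ne_zero.mpr hf
  obtain ⟨Q, hQ⟩ := PowerSeries.isSquare_of_constantCoeff_eq_one (Ne.isUnit h2)
    (P := PowerSeries.C f.leadingCoeff⁻¹ * f.powerSeriesPart) (by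
      rw [map_mul, ← PowerSeries.coeff_zero_eq_constantCoeff_apply f.powerSeriesPart,
        powerSeriesPart_coeff]
      simp [← leadingCoeff_eq, ha])
  refine ⟨HahnSeries.ofPowerSeries ℤ F Q, ?_⟩
  have hpart : f.powerSeriesPart = PowerSeries.C f.leadingCoeff * (Q * Q) := by
    rw [← hQ, ← mul_assoc, ← map_mul, mul_inv_cancel₀ ha, map_one, one_mul]
  conv_lhs => rw [← f.single_order_mul_powerSeriesPart, hpart]
  rw [map_mul, map_mul, PowerSeries.coe_C, C_apply, ← mul_assoc, single_mul_single, add_zero,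
    one_mul, sq]

theorem exists_single_eq_C_mul_sq_or_eq_C_mul_X_mul_sq (n : ℤ) (a : F) :
    ∃ d : LaurentSeries F,
      single n a = C a * d ^ 2 ∨ single n a = C a * single 1 1 * d ^ 2 := by
  obtain ⟨k, rfl | rfl⟩ := Int.even_or_odd' n
  · refine ⟨single k 1, Or.inl ?_⟩
    rw [sq, single_mul_single, C_apply, single_mul_single, zero_add, one_mul, mul_one, two_mul]
  · refine ⟨single k 1, Or.inr ?_⟩
    rw [sq, single_mul_single, C_apply, single_mul_single, single_mul_single, one_mul,
      mul_one, mul_one, zero_add, add_comm, two_mul]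

theorem exists_eq_C_mul_sq_or_eq_C_mul_X_mul_sq (h2 : (2 : F) ≠ 0) (f : LaurentSeries F) :
    ∃ c : LaurentSeries F,
      f = C f.leadingCoeff * c ^ 2 ∨ f = C f.leadingCoeff * single 1 1 * c ^ 2 := by
  obtain ⟨c, hc⟩ := exists_eq_single_mul_sq h2 f
  obtain ⟨d, hd | hd⟩ := exists_single_eq_C_mul_sq_or_eq_C_mul_X_mul_sq f.order f.leadingCoeff
  · exact ⟨d * c, Or.inl (by rwa [mul_pow, ← mul_assoc, ← hd])⟩
  · exact ⟨d * c, Or.inr (by rwa [mul_pow, ← mul_assoc, ← hd])⟩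
end LaurentSeries

section IteratedLaurentSeries

variable {F : Type*} [Field F]

def orderParity (f : LaurentSeries (LaurentSeries F)) : ZMod 2 × ZMod 2 :=
  (f.order, f.leadingCoeff.order)

theorem orderParity_one : orderParity (1 : LaurentSeries (LaurentSeries F)) = 0 := by
  simp [orderParity]

theorem orderParity_mul {f g : LaurentSeries (LaurentSeries F)} (hf : f ≠ 0) (hg : g ≠ 0) :
    orderParity (f * g) = orderParity f + orderParity g := by
  have hf' : f.leadingCoeff ≠ 0 := leadingCoeff_ne_zero.2 hf
  have hg' : g.leadingCoeff ≠ 0 := leadingCoeff_ne_zero.2 hg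
  simp [orderParity, order_mul hf hg, leadingCoeff_mul, order_mul hf' hg']

theorem orderParity_add_eq_left_of_lex_lt {f g : LaurentSeries (LaurentSeries F)} (hf : f ≠ 0)
    (h : toLex (f.orderTop, f.leadingCoeff.orderTop) <
      toLex (g.orderTop, g.leadingCoeff.orderTop)) :
    f + g ≠ 0 ∧ orderParity (f + g) = orderParity f ∧
      (f + g).leadingCoeff.leadingCoeff = f.leadingCoeff.leadingCoeff := by
  obtain ⟨htop, hlctop, hlc⟩ := leadingCoeff_leadingCoeff_add_eq_left h
  have hne : f + g ≠ 0 := by rwa [← orderTop_ne_top, htop, orderTop_ne_top]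
  have hlcne : (f + g).leadingCoeff ≠ 0 := leadingCoeff_ne_zero.2 hne
  refine ⟨hne, ?_, hlc⟩
  simp only [orderParity, order_eq_of_orderTop_eq hne htop,
    order_eq_of_orderTop_eq hlcne hlctop]

theorem leadingCoeff_leadingCoeff_inv (f : LaurentSeries (LaurentSeries F)) :
    f⁻¹.leadingCoeff.leadingCoeff = (f.leadingCoeff.leadingCoeff)⁻¹ := by
  rcases eq_or_ne f 0 with rfl | hf
  · simp
  refine eq_inv_of_mul_eq_one_left ?_
  rw [← leadingCoeff_mul, ← leadingCoeff_mul, inv_mul_cancel₀ hf, leadingCoeff_one,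
    leadingCoeff_one]

def IsSquareLeadingIn (C : Set (ZMod 2 × ZMod 2)) (f : LaurentSeries (LaurentSeries F)) : Prop :=
  f ≠ 0 → orderParity f ∈ C ∧ IsSquare f.leadingCoeff.leadingCoeff

theorem IsSquareLeadingIn.mono {C D : Set (ZMod 2 × ZMod 2)}
    {f : LaurentSeries (LaurentSeries F)} (hf : IsSquareLeadingIn C f) (hCD : C ⊆ D) :
    IsSquareLeadingIn D f :=
  fun hne => (hf hne).imp_left (@hCD _)

theorem IsSquareLeadingIn.add {C D : Set (ZMod 2 × ZMod 2)}
    {f g : LaurentSeries (LaurentSeries F)} (hf : IsSquareLeadingIn C f)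
    (hg : IsSquareLeadingIn D g) (hCD : Disjoint C D) :
    IsSquareLeadingIn (C ∪ D) (f + g) := by
  rcases eq_or_ne f 0 with rfl | hf0
  · simpa using hg.mono Set.subset_union_right
  rcases eq_or_ne g 0 with rfl | hg0
  · simpa using hf.mono Set.subset_union_left
  obtain ⟨hfC, hfsq⟩ := hf hf0
  obtain ⟨hgD, hgsq⟩ := hg hg0
  refine fun _ => ?_
  rcases lt_trichotomy (toLex (f.orderTop, f.leadingCoeff.orderTop))
    (toLex (g.orderTop, g.leadingCoeff.orderTop)) with hlt | heq | hgt
  · obtain ⟨-, hpar, hlc⟩ := orderParity_add_eq_left_of_lex_lt hf0 hlt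
    exact ⟨Or.inl (hpar ▸ hfC), hlc ▸ hfsq⟩
  · obtain ⟨htop, hlctop⟩ := Prod.ext_iff.1 (toLex.injective heq)
    have hpar : orderParity f = orderParity g := by
      simp only [orderParity, order_eq_of_orderTop_eq hf0 htop,
        order_eq_of_orderTop_eq (leadingCoeff_ne_zero.2 hf0) hlctop]
    exact absurd hgD (Set.disjoint_left.1 hCD (hpar ▸ hfC))
  · obtain ⟨-, hpar, hlc⟩ := add_comm f g ▸ orderParity_add_eq_left_of_lex_lt hg0 hgt
    exact ⟨Or.inr (hpar ▸ hgD), hlc ▸ hgsq⟩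

theorem isSquareLeadingIn_mul_sq {m : LaurentSeries (LaurentSeries F)} {p : ZMod 2 × ZMod 2}
    (hm : m ≠ 0) (hp : orderParity m = p) (hsq : IsSquare m.leadingCoeff.leadingCoeff)
    (u : LaurentSeries (LaurentSeries F)) : IsSquareLeadingIn {p} (m * u ^ 2) := by
  intro hmu
  have hu : u ≠ 0 := by rintro rfl; simp at hmu
  refine ⟨?_, by simpa [sq, leadingCoeff_mul] using hsq.mul (IsSquare.mul_self _)⟩
  rw [sq, orderParity_mul hm (mul_ne_zero hu hu), orderParity_mul hu hu, Set.mem_singleton_iff,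
    CharTwo.add_self_eq_zero, add_zero, hp]

theorem orderParity_C_single_one :
    orderParity (C (single 1 1) : LaurentSeries (LaurentSeries F)) = (0, 1) := by
  rw [orderParity, C_apply, order_single (single_ne_zero one_ne_zero), leadingCoeff_of_single,
    order_single one_ne_zero]
  simp

theorem orderParity_single_one :
    orderParity (single 1 1 : LaurentSeries (LaurentSeries F)) = (1, 0) := by
  rw [orderParity, order_single one_ne_zero, leadingCoeff_of_single, order_one]
  simp

theorem isSquareLeadingIn_XY_form (u v w : LaurentSeries (LaurentSeries F)) :
    IsSquareLeadingIn {0}ᶜ (C (single 1 1) * u ^ 2 + single 1 1 * v ^ 2 +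
      C (single 1 1) * single 1 1 * w ^ 2) := by
  have hX : (C (single 1 1) : LaurentSeries (LaurentSeries F)) ≠ 0 :=
    C_ne_zero (single_ne_zero one_ne_zero)
  have hY : (single 1 1 : LaurentSeries (LaurentSeries F)) ≠ 0 := single_ne_zero one_ne_zero
  have hXY : orderParity (C (single 1 1) * single 1 1 : LaurentSeries (LaurentSeries F)) =
      (1, 1) := by
    rw [orderParity_mul hX hY, orderParity_C_single_one, orderParity_single_one]
    rfl
  refine (((isSquareLeadingIn_mul_sq hX orderParity_C_single_one ?_ u).add
    (isSquareLeadingIn_mul_sq hY orderParity_single_one ?_ v) ?_).add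
    (isSquareLeadingIn_mul_sq (mul_ne_zero hX hY) hXY ?_ w) ?_).mono ?_
  all_goals simp [Prod.ext_iff]

theorem isSquare_leadingCoeff_leadingCoeff_iff (h2 : (2 : F) ≠ 0)
    (f : LaurentSeries (LaurentSeries F)) :
    IsSquare f.leadingCoeff.leadingCoeff ↔ ∃ c : LaurentSeries (LaurentSeries F),
      f = c ^ 2 ∨ f = C (single 1 1 : LaurentSeries F) * c ^ 2 ∨ f = single 1 1 * c ^ 2 ∨
        f = C (single 1 1 : LaurentSeries F) * single 1 1 * c ^ 2 := by
  constructor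
  · rintro ⟨β, hβ⟩
    have h2' : (2 : LaurentSeries F) ≠ 0 := by
      rw [← map_ofNat C 2]
      exact C_ne_zero h2
    obtain ⟨c, hc | hc⟩ := LaurentSeries.exists_eq_C_mul_sq_or_eq_C_mul_X_mul_sq h2' f <;>
    obtain ⟨d, hd | hd⟩ :=
      LaurentSeries.exists_eq_C_mul_sq_or_eq_C_mul_X_mul_sq h2 f.leadingCoeff <;>
    rw [hd, hβ] at hc <;> refine ⟨C (C β * d) * c, ?_⟩ <;> simp only [hc, map_mul, map_pow]
    · exact Or.inl (by ring)
    · exact Or.inr (Or.inl (by ring))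
    · exact Or.inr (Or.inr (Or.inl (by ring)))
    · exact Or.inr (Or.inr (Or.inr (by ring)))
  · rintro ⟨c, rfl | rfl | rfl | rfl⟩ <;>
      simp only [sq, leadingCoeff_mul, C_apply, leadingCoeff_of_single, leadingCoeff_one,
        one_mul] <;>
      exact IsSquare.mul_self (leadingCoeff (leadingCoeff c))

end IteratedLaurentSeries

section QuadraticForm

variable {K V : Type*} [Field K] [AddCommGroup V] [Module K V]

theorem ngrp_le_tgrp (Q : QuadraticForm K V) : Ngrp Q ≤ Tgrp Q := by
  rw [Ngrp, Subgroup.closure_le]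
  rintro u ⟨a, b, ha, hb, rfl⟩
  exact mul_mem (Subgroup.subset_closure ha) (Subgroup.subset_closure hb)

theorem mem_ngrp_of_val_eq_mul (Q : QuadraticForm K V) {u : Kˣ} (v w : V)
    (h : (u : K) = Q v * Q w) : u ∈ Ngrp Q := by
  have hv : Q v ≠ 0 := left_ne_zero_of_mul (h ▸ u.ne_zero)
  have hw : Q w ≠ 0 := right_ne_zero_of_mul (h ▸ u.ne_zero)
  exact Subgroup.subset_closure
    ⟨Units.mk0 _ hv, Units.mk0 _ hw, ⟨v, rfl⟩, ⟨w, rfl⟩, Units.ext h⟩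

end QuadraticForm

def squareLeadingSubgroup : Subgroup (LK K₀)ˣ where
  carrier := {u | IsSquare (leadingCoeff (leadingCoeff (u : LK K₀)))}
  one_mem' := by
    show IsSquare (leadingCoeff (leadingCoeff (1 : LaurentSeries (LaurentSeries K₀))))
    rw [leadingCoeff_one, leadingCoeff_one]
    exact IsSquare.one
  mul_mem' {a b} ha hb := by
    rw [Set.mem_ofPred_eq, Units.val_mul]
    -- `LK K₀` is a plain (non-reducible) synonym, so the `HahnSeries` lemmas only match via `erw`
    erw [leadingCoeff_mul, leadingCoeff_mul]
    exact ha.mul hb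
  inv_mem' {u} hu := by
    rw [Set.mem_ofPred_eq, Units.val_inv_eq_inv_val]
    erw [leadingCoeff_leadingCoeff_inv]
    exact hu.inv

section

variable {K₀}

theorem phiXY_apply (v : Fin 3 → LK K₀) :
    phiXY K₀ v = elX K₀ * v 0 ^ 2 + elY K₀ * v 1 ^ 2 + elX K₀ * elY K₀ * v 2 ^ 2 := by
  simp [phiXY, QuadraticMap.weightedSumSquares_apply, Fin.sum_univ_three, smul_eq_mul, sq]

theorem isSquareLeadingIn_phiXY (v : Fin 3 → LK K₀) :
    IsSquareLeadingIn {0}ᶜ (phiXY K₀ v) := by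
  rw [phiXY_apply]
  exact isSquareLeadingIn_XY_form _ _ _

theorem one_notMem_dunits_phiXY : (1 : (LK K₀)ˣ) ∉ Dunits (phiXY K₀) := by
  rintro ⟨v, hv⟩
  have h := isSquareLeadingIn_phiXY v
  rw [hv] at h
  exact (h (1 : (LK K₀)ˣ).ne_zero).1 orderParity_one

theorem mem_squareLeadingSubgroup_iff (h2 : (2 : K₀) ≠ 0) {u : (LK K₀)ˣ} :
    u ∈ squareLeadingSubgroup K₀ ↔
      ∃ c : LK K₀, (u : LK K₀) = c ^ 2 ∨ (u : LK K₀) = elX K₀ * c ^ 2 ∨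
        (u : LK K₀) = elY K₀ * c ^ 2 ∨ (u : LK K₀) = elX K₀ * elY K₀ * c ^ 2 :=
  isSquare_leadingCoeff_leadingCoeff_iff h2 (u : LK K₀)

theorem dunits_phiXY_subset : Dunits (phiXY K₀) ⊆ squareLeadingSubgroup K₀ := by
  rintro u ⟨v, hv⟩
  exact (hv ▸ isSquareLeadingIn_phiXY v) u.ne_zero |>.2

theorem squareLeadingSubgroup_le_ngrp (h2 : (2 : K₀) ≠ 0) :
    squareLeadingSubgroup K₀ ≤ Ngrp (phiXY K₀) := by
  have hX : elX K₀ ≠ 0 := C_ne_zero (single_ne_zero one_ne_zero)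
  have hY : elY K₀ ≠ 0 := single_ne_zero one_ne_zero
  intro u hu
  obtain ⟨c, hc | hc | hc | hc⟩ := (mem_squareLeadingSubgroup_iff h2).1 hu
  · refine mem_ngrp_of_val_eq_mul _ ![c, 0, 0] ![(elX K₀)⁻¹, 0, 0] ?_
    simp [hc, phiXY_apply]
    field_simp
  · refine mem_ngrp_of_val_eq_mul _ ![0, c, 0] ![0, 0, (elY K₀)⁻¹] ?_
    simp [hc, phiXY_apply]
    field_simp
  · refine mem_ngrp_of_val_eq_mul _ ![c, 0, 0] ![0, 0, (elX K₀)⁻¹] ?_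
    simp [hc, phiXY_apply]
    field_simp
  · refine mem_ngrp_of_val_eq_mul _ ![c, 0, 0] ![0, 1, 0] ?_
    simp [hc, phiXY_apply]
    ring

end

/-- over `K = K₀((X))((Y))` the form `⟨X, Y, XY⟩` does not represent 1,
yet `T_K(φ) = N_K(φ) = K*² ∪ XK*² ∪ YK*² ∪ XYK*²`. -/
theorem stmt_2 (h2 : (2 : K₀) ≠ 0) :
    (1 : (LK K₀)ˣ) ∉ Dunits (phiXY K₀) ∧
      Tgrp (phiXY K₀) = Ngrp (phiXY K₀) ∧
      (∀ u : (LK K₀)ˣ, u ∈ Tgrp (phiXY K₀) ↔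
        ∃ c : LK K₀, (u : LK K₀) = c ^ 2 ∨ (u : LK K₀) = elX K₀ * c ^ 2 ∨
          (u : LK K₀) = elY K₀ * c ^ 2 ∨ (u : LK K₀) = elX K₀ * elY K₀ * c ^ 2) := by
  have hTS : Tgrp (phiXY K₀) ≤ squareLeadingSubgroup K₀ :=
    (Subgroup.closure_le _).2 dunits_phiXY_subset
  have hSN := squareLeadingSubgroup_le_ngrp h2
  have hNT := ngrp_le_tgrp (phiXY K₀)
  refine ⟨one_notMem_dunits_phiXY, le_antisymm (hTS.trans hSN) hNT, fun u => ?_⟩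
  rw [← mem_squareLeadingSubgroup_iff h2]
  exact ⟨fun hu => hTS hu, fun hu => hNT (hSN hu)⟩

end
end

section
/- Let f ∈ K[X₁,…,Xₘ] be an irreducible polynomial and φ a nondegenerate quadratic form over K. If there exists a ∈ K* such that a·f lies in T_{K(X₁,…,Xₘ)}(φ), the group generated by values of φ over the rational function field, then φ becomes isotropic over K(f), the fraction field of K[X₁,…,Xₘ]/(f). -/
open scoped TensorProduct

noncomputable section

/-- Products of exactly `m` values represented by `Q`. -/
def Dpow {K V : Type*} [Field K] [AddCommGroup V] [Module K V]
    (Q : QuadraticForm K V) (m : ℕ) : Set K :=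
  {x | ∃ c : Fin m → K, (∀ i, c i ∈ Dv Q) ∧ x = ∏ i, c i}

/-- Isotropy of (the scalar extension of) `Q` over a commutative `K`-algebra `F`. -/
def IsotropicOver {K V : Type*} [Field K] [Invertible (2 : K)] [AddCommGroup V] [Module K V]
    (Q : QuadraticForm K V) (F : Type*) [CommRing F] [Algebra K F] : Prop :=
  ∃ w : F ⊗[K] V, w ≠ 0 ∧ Q.baseChange F w = 0

/-- The polynomial obtained by evaluating `Q` at the generic point in the basis `b`. -/
def genPoly {K V ι : Type*} [Field K] [Invertible (2 : K)] [AddCommGroup V] [Module K V]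
    [Fintype ι] (b : Module.Basis ι K V) (Q : QuadraticForm K V) : MvPolynomial ι K :=
  Q.baseChange (MvPolynomial ι K) (∑ i, MvPolynomial.X i ⊗ₜ[K] b i)

/-- The affine coordinate ring of the quadric `Q = 0` (in the coordinates given by `b`). -/
abbrev CoordRing {K V ι : Type*} [Field K] [Invertible (2 : K)] [AddCommGroup V] [Module K V]
    [Fintype ι] (b : Module.Basis ι K V) (Q : QuadraticForm K V) : Type _ :=
  MvPolynomial ι K ⧸ Ideal.span {genPoly b Q}

/-- The function field `K(Q)` of the quadric `Q = 0`. -/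
abbrev FunctionFieldQF {K V ι : Type*} [Field K] [Invertible (2 : K)] [AddCommGroup V]
    [Module K V] [Fintype ι] (b : Module.Basis ι K V) (Q : QuadraticForm K V) : Type _ :=
  FractionRing (CoordRing b Q)


/-! Write `p = f`. If `φ(w)` has odd `p`-adic multiplicity for a vector `w` over `K[X]`, divide
`w` by `p` as long as its reduction mod `p` vanishes; each step lowers the multiplicity by two,
so eventually the reduction of `w` is a nonzero vector over `K(f)` on which `φ` vanishes.
Hence if `φ` stays anisotropic over `K(f)`, every value of `φ` over `K(X)` has even `p`-adic
valuation (clear denominators), and so does all of `T_{K(X)}(φ)`; but `a·f` has valuation one. -/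

open TensorProduct

section BaseChangeNaturality

variable {K V A B : Type*} [Field K] [AddCommGroup V] [Module K V]
  [CommRing A] [Algebra K A] [CommRing B] [Algebra K B] (ψ : A →ₐ[K] B)

theorem LinearMap.BilinForm.baseChange_rTensor_apply (β : LinearMap.BilinForm K V)
    (x y : A ⊗[K] V) :
    β.baseChange B (ψ.toLinearMap.rTensor V x) (ψ.toLinearMap.rTensor V y) =
      ψ (β.baseChange A x y) := by
  induction x using TensorProduct.induction_on with
  | zero => simp
  | add x₁ x₂ h₁ h₂ => simp only [map_add, LinearMap.add_apply, h₁, h₂]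
  | tmul a v =>
    induction y using TensorProduct.induction_on with
    | zero => simp
    | add y₁ y₂ h₁ h₂ => simp only [map_add, h₁, h₂]
    | tmul a' v' => simp [Algebra.smul_def]

theorem QuadraticForm.baseChange_rTensor_apply [Invertible (2 : K)] (Q : QuadraticForm K V)
    (x : A ⊗[K] V) :
    Q.baseChange B (ψ.toLinearMap.rTensor V x) = ψ (Q.baseChange A x) := by
  let : Invertible (2 : A) := (Invertible.map (algebraMap K A) 2).copy 2 (map_ofNat _ _).symm
  let : Invertible (2 : B) := (Invertible.map (algebraMap K B) 2).copy 2 (map_ofNat _ _).symm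
  rw [← QuadraticMap.associated_eq_self_apply B, ← QuadraticMap.associated_eq_self_apply A,
    QuadraticForm.associated_baseChange, QuadraticForm.associated_baseChange,
    LinearMap.BilinForm.baseChange_rTensor_apply]

end BaseChangeNaturality

section Descent

variable {K V R : Type*} [Field K] [AddCommGroup V] [Module K V] [CommRing R] [Algebra K R]

theorem exists_eq_smul_of_rTensor_mk_eq_zero {p : R} {w : R ⊗[K] V}
    (hw : (Ideal.Quotient.mkₐ K (Ideal.span {p})).toLinearMap.rTensor V w = 0) :
    ∃ w' : R ⊗[K] V, w = p • w' := by
  have hexact : Function.Exact (LinearMap.mulLeft K p)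
      (Ideal.Quotient.mkₐ K (Ideal.span {p})).toLinearMap := fun x => by
    rw [Set.mem_range, AlgHom.toLinearMap_apply, Ideal.Quotient.mkₐ_eq_mk,
      Ideal.Quotient.eq_zero_iff_mem, Ideal.mem_span_singleton, dvd_def]
    simp only [LinearMap.mulLeft_apply, eq_comm]
  obtain ⟨w', rfl⟩ :=
    (rTensor_exact V hexact (Ideal.Quotient.mkₐ_surjective K _) w).mp hw
  refine ⟨w', ?_⟩
  clear hw
  induction w' using TensorProduct.induction_on with
  | zero => simp
  | tmul a v => simp [smul_tmul']
  | add w₁ w₂ h₁ h₂ => rw [map_add, h₁, h₂, smul_add]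

variable [Invertible (2 : K)] [IsDomain R]

theorem isotropicOver_of_odd_multiplicity {p : R} (hp : Prime p) (Q : QuadraticForm K V)
    {w : R ⊗[K] V} (hfin : FiniteMultiplicity p (Q.baseChange R w))
    (hodd : Odd (multiplicity p (Q.baseChange R w))) :
    IsotropicOver Q (FractionRing (R ⧸ Ideal.span {p})) := by
  have : (Ideal.span {p}).IsPrime := (Ideal.span_singleton_prime hp.ne_zero).mpr hp
  set mk := Ideal.Quotient.mkₐ K (Ideal.span {p})
  set ι := IsScalarTower.toAlgHom K (R ⧸ Ideal.span {p}) (FractionRing (R ⧸ Ideal.span {p}))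
  induction hN : multiplicity p (Q.baseChange R w) using Nat.strong_induction_on generalizing w
    with | _ N ih =>
  by_cases hw : mk.toLinearMap.rTensor V w = 0
  · obtain ⟨w', rfl⟩ := exists_eq_smul_of_rTensor_mk_eq_zero hw
    rw [QuadraticMap.map_smul, smul_eq_mul] at hfin hodd hN
    have hmul : multiplicity p (p * p * Q.baseChange R w') =
        multiplicity p (Q.baseChange R w') + 2 := by
      rw [multiplicity_mul hp hfin, ← sq, multiplicity_pow_self_of_prime hp, add_comm]
    exact ih _ (by omega) hfin.mul_right ((Nat.odd_add.mp (hmul ▸ hodd)).mpr even_two) rfl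
  · refine ⟨ι.toLinearMap.rTensor V (mk.toLinearMap.rTensor V w), ?_, ?_⟩
    · exact (map_ne_zero_iff _ (Module.Flat.rTensor_preserves_injective_linearMap _
        (IsFractionRing.injective _ _))).mpr hw
    · have hmem : Q.baseChange R w ∈ Ideal.span {p} :=
        Ideal.mem_span_singleton.mpr (multiplicity_ne_zero.mp hodd.pos.ne')
      rw [QuadraticForm.baseChange_rTensor_apply, QuadraticForm.baseChange_rTensor_apply,
        Ideal.Quotient.mkₐ_eq_mk, Ideal.Quotient.eq_zero_iff_mem.mpr hmem, map_zero]

end Descent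

section EvenMultiplicity

variable {R : Type*} [CommRing R] [IsDomain R] [WfDvdMonoid R] {p : R}

def evenMultiplicitySubgroup (hp : Prime p) : Subgroup (FractionRing R)ˣ where
  carrier := {u | ∃ r s : R, r ≠ 0 ∧ s ≠ 0 ∧
    algebraMap R (FractionRing R) r = u * algebraMap R (FractionRing R) s ∧
    Even (multiplicity p r + multiplicity p s)}
  one_mem' := ⟨1, 1, one_ne_zero, one_ne_zero, by simp, ⟨_, rfl⟩⟩
  mul_mem' := by
    rintro u u' ⟨r, s, hr, hs, h, he⟩ ⟨r', s', hr', hs', h', he'⟩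
    refine ⟨r * r', s * s', mul_ne_zero hr hr', mul_ne_zero hs hs', ?_, ?_⟩
    · rw [map_mul, map_mul, h, h', Units.val_mul]
      exact mul_mul_mul_comm _ _ _ _
    · rw [multiplicity_mul hp (.of_not_isUnit hp.not_isUnit (mul_ne_zero hr hr')),
        multiplicity_mul hp (.of_not_isUnit hp.not_isUnit (mul_ne_zero hs hs')),
        add_add_add_comm]
      exact he.add he'
  inv_mem' := by
    rintro u ⟨r, s, hr, hs, h, he⟩
    refine ⟨s, r, hs, hr, ?_, by rwa [add_comm]⟩
    rw [h, ← mul_assoc, ← Units.val_mul, inv_mul_cancel, Units.val_one, one_mul]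

theorem unit_mul_notMem_evenMultiplicitySubgroup (hp : Prime p) {c : R} (hc : IsUnit c)
    {u : (FractionRing R)ˣ} (hu : (u : FractionRing R) = algebraMap R (FractionRing R) (c * p)) :
    u ∉ evenMultiplicitySubgroup hp := by
  rintro ⟨r, s, hr, hs, h, he⟩
  rw [hu, ← map_mul] at h
  obtain rfl := IsFractionRing.injective R (FractionRing R) h
  rw [multiplicity_mul hp (.of_not_isUnit hp.not_isUnit hr),
    multiplicity_mul hp (.of_not_isUnit hp.not_isUnit (mul_ne_zero hc.ne_zero hp.ne_zero)),
    multiplicity_of_isUnit_right hp.not_isUnit hc, multiplicity_self] at he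
  obtain ⟨k, hk⟩ := he
  omega

variable {K V : Type*} [Field K] [Invertible (2 : K)] [AddCommGroup V] [Module K V] [Algebra K R]

theorem dunits_baseChange_subset_evenMultiplicitySubgroup (hp : Prime p) (Q : QuadraticForm K V)
    (hQ : ¬ IsotropicOver Q (FractionRing (R ⧸ Ideal.span {p}))) :
    Dunits (Q.baseChange (FractionRing R)) ⊆ evenMultiplicitySubgroup hp := by
  rintro u ⟨v, hv⟩
  obtain ⟨⟨w, d⟩, hd⟩ := IsLocalizedModule.surj (nonZeroDivisors R)
    (AlgebraTensorModule.rTensor K V (Algebra.linearMap R (FractionRing R))) v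
  have hd0 : (d : R) * d ≠ 0 :=
    mul_ne_zero (nonZeroDivisors.ne_zero d.2) (nonZeroDivisors.ne_zero d.2)
  have hw : algebraMap R (FractionRing R) (Q.baseChange R w) =
      u * algebraMap R (FractionRing R) (d * d) := by
    have := QuadraticForm.baseChange_rTensor_apply (IsScalarTower.toAlgHom K R (FractionRing R)) Q w
    rw [IsScalarTower.coe_toAlgHom'] at this
    rw [← this]
    change Q.baseChange _ (AlgebraTensorModule.rTensor K V (Algebra.linearMap R _) w) = _
    rw [← hd, Submonoid.smul_def, ← algebraMap_smul (FractionRing R) (d : R) v,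
      QuadraticMap.map_smul, hv, smul_eq_mul, map_mul, mul_comm]
  have hw0 : Q.baseChange R w ≠ 0 := by
    intro h0
    rw [h0, map_zero] at hw
    exact mul_ne_zero u.ne_zero ((map_ne_zero_iff _ (IsFractionRing.injective R _)).mpr hd0) hw.symm
  refine ⟨_, _, hw0, hd0, hw, ?_⟩
  have heven : Even (multiplicity p (Q.baseChange R w)) := by
    by_contra hodd
    exact hQ (isotropicOver_of_odd_multiplicity hp Q (.of_not_isUnit hp.not_isUnit hw0)
      (Nat.not_even_iff_odd.mp hodd))
  rw [multiplicity_mul hp (.of_not_isUnit hp.not_isUnit hd0)]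
  exact heven.add ⟨_, rfl⟩

end EvenMultiplicity

theorem stmt_5_general {K : Type*} [Field K] [Invertible (2 : K)] {n m : ℕ}
    (φ : QuadraticForm K (Fin n → K))
    (f : MvPolynomial (Fin m) K) (hf : Irreducible f) (a : K) (ha : a ≠ 0)
    (h : ∃ u : (FractionRing (MvPolynomial (Fin m) K))ˣ,
      (u : FractionRing (MvPolynomial (Fin m) K)) =
        algebraMap (MvPolynomial (Fin m) K) (FractionRing (MvPolynomial (Fin m) K))
          (MvPolynomial.C a * f) ∧
      u ∈ Tgrp (φ.baseChange (FractionRing (MvPolynomial (Fin m) K)))) :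
    IsotropicOver φ (FractionRing (MvPolynomial (Fin m) K ⧸ Ideal.span {f})) := by
  obtain ⟨u, hu, huT⟩ := h
  have hp : Prime f := hf.prime
  by_contra hiso
  have hT : Tgrp (φ.baseChange _) ≤ evenMultiplicitySubgroup hp :=
    (Subgroup.closure_le _).mpr (dunits_baseChange_subset_evenMultiplicitySubgroup hp φ hiso)
  exact unit_mul_notMem_evenMultiplicitySubgroup hp (ha.isUnit.map MvPolynomial.C) hu (hT huT)

/-- if `a·f ∈ T_{K(X)}(φ)` for some `a ∈ K*`, then `φ` is isotropic over
`K(f) = Frac(K[X₁,…,Xₘ]/(f))`. -/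
theorem stmt_5 {K : Type*} [Field K] [Invertible (2 : K)] {n m : ℕ}
    (φ : QuadraticForm K (Fin n → K))
    (hndφ : (QuadraticMap.associated (R := K) φ).Nondegenerate)
    (f : MvPolynomial (Fin m) K) (hf : Irreducible f) (a : K) (ha : a ≠ 0)
    (h : ∃ u : (FractionRing (MvPolynomial (Fin m) K))ˣ,
      (u : FractionRing (MvPolynomial (Fin m) K)) =
        algebraMap (MvPolynomial (Fin m) K) (FractionRing (MvPolynomial (Fin m) K))
          (MvPolynomial.C a * f) ∧
      u ∈ Tgrp (φ.baseChange (FractionRing (MvPolynomial (Fin m) K)))) :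
    IsotropicOver φ (FractionRing (MvPolynomial (Fin m) K ⧸ Ideal.span {f})) :=
  stmt_5_general φ f hf a ha h

end
end

section
/- Let f ∈ K[X] be an irreducible monic polynomial in one variable and φ an anisotropic quadratic form of dimension n over K. If f divides a polynomial of the form φ(p₁,…,pₙ) with p₁,…,pₙ ∈ K[X] not all divisible by f, then f is a product of at most deg(f) elements of D_{K(X)}(φ), the set of values represented by φ over K(X). -/
open scoped TensorProduct

noncomputable section

/-!
Induction on `deg f`. Reducing the `pᵢ` modulo `f` and dividing out their gcd, we may assume
`deg pᵢ < deg f` and that the `pᵢ` have no common factor. By anisotropy the leading coefficient `u`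
of `φ(p)` is a value of `φ` and `deg φ(p) = 2 max deg pᵢ ≤ 2 deg f - 2`, so `φ(p) = f · u · g`
with `g` monic of degree at most `deg f - 2`. Every irreducible factor of `g` divides `φ(p)`, has
smaller degree than `f` and does not divide all `pᵢ`, so by induction `g` is a product of at most
`deg g` values, and `f = φ(p) · u⁻¹ · g⁻¹` is a product of at most `deg g + 2 ≤ deg f` values.
-/

open Polynomial

theorem Polynomial.Monic.exists_monic_eq_mul_C_leadingCoeff_mul {K : Type*} [Field K] {f c : K[X]}
    (hf : f.Monic) (hfc : f ∣ c) (hc : c ≠ 0) :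
    ∃ g : K[X], g.Monic ∧ c = f * C c.leadingCoeff * g ∧
      c.natDegree = f.natDegree + g.natDegree := by
  obtain ⟨c', rfl⟩ := hfc
  have hc' : c' ≠ 0 := right_ne_zero_of_mul hc
  have hlc : c'.leadingCoeff ≠ 0 := leadingCoeff_ne_zero.2 hc'
  have hg : (c' * C c'.leadingCoeff⁻¹).Monic := monic_mul_leadingCoeff_inv hc'
  refine ⟨_, hg, ?_, ?_⟩
  · have hcancel : C c'.leadingCoeff * (c' * C c'.leadingCoeff⁻¹) = c' := by
      rw [mul_left_comm, ← C_mul, mul_inv_cancel₀ hlc, C_1, mul_one]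
    rw [leadingCoeff_monic_mul hf, mul_assoc, hcancel]
  · rw [hf.natDegree_mul' hc', natDegree_mul_C (inv_ne_zero hlc)]

section Dpow

variable {K V : Type*} [Field K] [AddCommGroup V] [Module K V] {Q : QuadraticForm K V}

variable (Q) in
def DpowLe (m : ℕ) : Set K :=
  {x | ∃ k ≤ m, x ∈ Dpow Q k}

theorem inv_mem_Dv {a : K} (h : a ∈ Dv Q) : a⁻¹ ∈ Dv Q := by
  obtain ⟨ha, v, rfl⟩ := h
  refine ⟨inv_ne_zero ha, (Q v)⁻¹ • v, ?_⟩
  rw [QuadraticMap.map_smul, smul_eq_mul]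
  field_simp

theorem algebraMap_mem_Dv_baseChange [Invertible (2 : K)] {A : Type*} [Field A] [Algebra K A]
    {a : K} (h : a ∈ Dv Q) : algebraMap K A a ∈ Dv (Q.baseChange A) := by
  obtain ⟨ha, v, rfl⟩ := h
  refine ⟨(map_ne_zero_iff _ (algebraMap K A).injective).2 ha, 1 ⊗ₜ v, ?_⟩
  rw [QuadraticForm.baseChange_tmul, mul_one, Algebra.algebraMap_eq_smul_one]

theorem mul_mem_Dpow {x y : K} {k l : ℕ} (hx : x ∈ Dpow Q k) (hy : y ∈ Dpow Q l) :
    x * y ∈ Dpow Q (k + l) := by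
  obtain ⟨c, hc, rfl⟩ := hx
  obtain ⟨d, hd, rfl⟩ := hy
  exact ⟨Fin.append c d, Fin.addCases (by simpa using hc) (by simpa using hd),
    by simp [Fin.prod_univ_add]⟩

theorem inv_mem_Dpow {x : K} {k : ℕ} (hx : x ∈ Dpow Q k) : x⁻¹ ∈ Dpow Q k := by
  obtain ⟨c, hc, rfl⟩ := hx
  exact ⟨fun i => (c i)⁻¹, fun i => inv_mem_Dv (hc i), by rw [Finset.prod_inv_distrib]⟩

theorem one_mem_DpowLe (m : ℕ) : (1 : K) ∈ DpowLe Q m :=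
  ⟨0, m.zero_le, finZeroElim, finZeroElim, by simp⟩

theorem mem_DpowLe_one_of_mem_Dv {a : K} (h : a ∈ Dv Q) : a ∈ DpowLe Q 1 :=
  ⟨1, le_rfl, fun _ => a, fun _ => h, by simp⟩

theorem DpowLe_mono {m m' : ℕ} (h : m ≤ m') : DpowLe Q m ⊆ DpowLe Q m' :=
  fun _ ⟨k, hk, hx⟩ => ⟨k, hk.trans h, hx⟩

theorem mul_mem_DpowLe {x y : K} {m m' : ℕ} (hx : x ∈ DpowLe Q m) (hy : y ∈ DpowLe Q m') :
    x * y ∈ DpowLe Q (m + m') := by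
  obtain ⟨k, hk, hx⟩ := hx
  obtain ⟨l, hl, hy⟩ := hy
  exact ⟨k + l, add_le_add hk hl, mul_mem_Dpow hx hy⟩

theorem inv_mem_DpowLe {x : K} {m : ℕ} (hx : x ∈ DpowLe Q m) : x⁻¹ ∈ DpowLe Q m := by
  obtain ⟨k, hk, hx⟩ := hx
  exact ⟨k, hk, inv_mem_Dpow hx⟩

theorem Polynomial.Monic.map_mem_DpowLe_of_irreducible {R : Type*} [Field R] (ψ : R[X] →* K)
    {g : R[X]} (hg : g.Monic)
    (h : ∀ q : R[X], q.Monic → Irreducible q → q ∣ g → ψ q ∈ DpowLe Q q.natDegree) :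
    ψ g ∈ DpowLe Q g.natDegree := by
  induction hN : g.natDegree using Nat.strong_induction_on generalizing g with
  | _ N IH =>
  by_cases hunit : IsUnit g
  · rw [hg.eq_one_of_isUnit hunit, map_one]
    exact one_mem_DpowLe N
  obtain ⟨q, hq, hqirr, t, rfl⟩ := exists_monic_irreducible_factor g hunit
  have ht : t.Monic := hq.of_mul_monic_left hg
  have hdeg : (q * t).natDegree = q.natDegree + t.natDegree := hq.natDegree_mul ht
  have hq_pos : 0 < q.natDegree := hqirr.natDegree_pos
  rw [map_mul, ← hN, hdeg]
  exact mul_mem_DpowLe (h q hq hqirr (dvd_mul_right q t))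
    (IH _ (by omega) ht (fun r hr hrirr hrt => h r hr hrirr (hrt.mul_left q)) rfl)

theorem mem_DpowLe_of_mul_mul_mem_Dv {x y z : K} {m : ℕ} (hxyz : x * y * z ∈ Dv Q) (hy : y ∈ Dv Q)
    (hz : z ∈ DpowLe Q m) : x ∈ DpowLe Q (1 + 1 + m) := by
  have hy0 : y ≠ 0 := hy.1
  have hz0 : z ≠ 0 := right_ne_zero_of_mul hxyz.1
  have hx : x = x * y * z * y⁻¹ * z⁻¹ := by field_simp
  rw [hx]
  exact mul_mem_DpowLe (mul_mem_DpowLe (mem_DpowLe_one_of_mem_Dv hxyz)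
    (mem_DpowLe_one_of_mem_Dv (inv_mem_Dv hy))) (inv_mem_DpowLe hz)


end Dpow

namespace QuadraticForm

variable {K A B ι : Type*} [Field K] [Invertible (2 : K)] [Fintype ι] [DecidableEq ι]
  [CommRing A] [Algebra K A] [CommRing B] [Algebra K B]

/-- `φ(x₁, …, xₙ)` for `xᵢ` in a commutative `K`-algebra `A`. -/
def evalVec (φ : QuadraticForm K (ι → K)) (x : ι → A) : A :=
  φ.baseChange A (∑ i, x i ⊗ₜ[K] Pi.single i 1)

variable (φ : QuadraticForm K (ι → K))

theorem evalVec_eq_sum (x : ι → A) :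
    φ.evalVec x = ∑ i, ∑ j, x i * x j * algebraMap K A (φ.toMatrix' i j) := by
  let : Invertible (2 : A) := (Invertible.map (algebraMap K A) 2).copy 2 (map_ofNat _ 2).symm
  rw [evalVec, ← QuadraticMap.associated_eq_self_apply A, associated_baseChange]
  simp only [map_sum, LinearMap.coe_sum, Finset.sum_apply, LinearMap.BilinForm.baseChange_tmul,
    Algebra.smul_def, toMatrix', LinearMap.toMatrix₂'_apply]
  rw [Finset.sum_comm]
  refine Finset.sum_congr rfl fun i _ => Finset.sum_congr rfl fun j _ => ?_
  ring

theorem evalVec_algebraMap (l : ι → K) : φ.evalVec (algebraMap K A ∘ l) = algebraMap K A (φ l) := by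
  have : ∑ i, algebraMap K A (l i) ⊗ₜ[K] (Pi.single i 1 : ι → K) = 1 ⊗ₜ l := by
    simp_rw [Algebra.algebraMap_eq_smul_one, TensorProduct.smul_tmul, ← TensorProduct.tmul_sum]
    congr 1
    simp [← Pi.single_smul, Finset.univ_sum_single]
  rw [evalVec, Function.comp_def, this, baseChange_tmul, mul_one, Algebra.algebraMap_eq_smul_one]

theorem apply_eq_sum (l : ι → K) : φ l = ∑ i, ∑ j, l i * l j * φ.toMatrix' i j := by
  simpa using (φ.evalVec_algebraMap (A := K) l).symm.trans (φ.evalVec_eq_sum _)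

theorem map_evalVec (g : A →ₐ[K] B) (x : ι → A) : g (φ.evalVec x) = φ.evalVec (g ∘ x) := by
  simp [evalVec_eq_sum]

theorem evalVec_smul (c : A) (x : ι → A) : φ.evalVec (c • x) = c * c * φ.evalVec x := by
  simp only [evalVec_eq_sum, Pi.smul_apply, smul_eq_mul, Finset.mul_sum]
  refine Finset.sum_congr rfl fun i _ => Finset.sum_congr rfl fun j _ => ?_
  ring

theorem evalVec_sub_mem {I : Ideal A} {x y : ι → A} (h : ∀ i, x i - y i ∈ I) :
    φ.evalVec x - φ.evalVec y ∈ I := by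
  rw [← Ideal.Quotient.mk_eq_mk_iff_sub_mem, ← Ideal.Quotient.mkₐ_eq_mk K, map_evalVec, map_evalVec]
  congr 1
  funext i
  exact (Ideal.Quotient.mk_eq_mk_iff_sub_mem _ _).2 (h i)

theorem map_evalVec_mem_Dv {F : Type*} [Field F] [Algebra K F] (g : A →ₐ[K] F) {x : ι → A}
    (hx : g (φ.evalVec x) ≠ 0) : g (φ.evalVec x) ∈ Dv (φ.baseChange F) := by
  rw [map_evalVec] at hx ⊢
  exact ⟨hx, _, rfl⟩

theorem natDegree_evalVec_le {s : ι → K[X]} {d : ℕ} (hs : ∀ i, (s i).natDegree ≤ d) :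
    (φ.evalVec s).natDegree ≤ d + d := by
  rw [evalVec_eq_sum]
  refine natDegree_sum_le_of_forall_le _ _ fun i _ =>
    natDegree_sum_le_of_forall_le _ _ fun j _ => ?_
  rw [algebraMap_eq]
  exact (natDegree_mul_C_le _ _).trans (natDegree_mul_le_of_le (hs i) (hs j))

theorem coeff_evalVec_add_self {s : ι → K[X]} {d : ℕ} (hs : ∀ i, (s i).natDegree ≤ d) :
    (φ.evalVec s).coeff (d + d) = φ (fun i => (s i).coeff d) := by
  simp only [evalVec_eq_sum, apply_eq_sum φ, finsetSum_coeff, algebraMap_eq, coeff_mul_C,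
    coeff_mul_add_eq_of_natDegree_le (hs _) (hs _)]

theorem exists_natDegree_evalVec_eq (hφ : φ.Anisotropic) {s : ι → K[X]} (hs : s ≠ 0) :
    ∃ i, (φ.evalVec s).natDegree = (s i).natDegree + (s i).natDegree ∧
      (φ.evalVec s).leadingCoeff ∈ Dv φ := by
  classical
  obtain ⟨i₁, hi₁⟩ := Function.ne_iff.1 hs
  obtain ⟨i, hi, hmax⟩ := Finset.exists_max_image {j | s j ≠ 0} (fun j => (s j).natDegree)
    ⟨i₁, by simpa using hi₁⟩
  have hle : ∀ j, (s j).natDegree ≤ (s i).natDegree := fun j => by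
    by_cases hj : s j = 0
    · simp [hj]
    · exact hmax j (by simpa using hj)
  have hval : φ (fun j => (s j).coeff (s i).natDegree) ≠ 0 := fun h0 =>
    (Finset.mem_filter.1 hi).2 (leadingCoeff_eq_zero.1 (congr_fun (hφ _ h0) i))
  have hcoeff := φ.coeff_evalVec_add_self hle
  have hdeg : (φ.evalVec s).natDegree = (s i).natDegree + (s i).natDegree :=
    (φ.natDegree_evalVec_le hle).antisymm (le_natDegree_of_ne_zero (hcoeff ▸ hval))
  have hlc : (φ.evalVec s).leadingCoeff = φ (fun j => (s j).coeff (s i).natDegree) := by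
    rw [leadingCoeff, hdeg, hcoeff]
  exact ⟨i, hdeg, hlc ▸ hval, _, hlc.symm⟩

theorem exists_primitive_of_prime_dvd_evalVec {A : Type*} [CommRing A] [IsDomain A]
    [NormalizedGCDMonoid A] [Algebra K A] {f : A} (hf : Prime f) {r : ι → A}
    (hr : ¬ ∀ i, f ∣ r i) (hdvd : f ∣ φ.evalVec r) :
    ∃ (c : A) (s : ι → A), c ≠ 0 ∧ r = c • s ∧ (∀ q, (∀ i, q ∣ s i) → IsUnit q) ∧
      f ∣ φ.evalVec s := by
  obtain ⟨i, hi⟩ := not_forall.1 hr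
  obtain ⟨s, hrs, hs⟩ := Finset.univ.extract_gcd r ⟨i, Finset.mem_univ i⟩
  set c := Finset.univ.gcd r
  have hrs : r = c • s := funext fun j => hrs j (Finset.mem_univ j)
  have hfc : ¬ f ∣ c := fun h => hi (h.trans (Finset.gcd_dvd (Finset.mem_univ i)))
  have hc : c ≠ 0 := fun h => hfc (h ▸ dvd_zero f)
  rw [hrs, evalVec_smul] at hdvd
  have hunit : ∀ q, (∀ i, q ∣ s i) → IsUnit q := fun q hq =>
    isUnit_of_dvd_one (hs ▸ Finset.dvd_gcd fun j _ => hq j)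
  exact ⟨c, s, hc, hrs, hunit, ((hf.dvd_or_dvd hdvd).resolve_left
    fun h => (hf.dvd_or_dvd h).elim hfc hfc)⟩

theorem exists_natDegree_lt_dvd_evalVec {f : K[X]} (hf : f.Monic) {p : ι → K[X]}
    (hp : ¬ ∀ i, f ∣ p i) (hdvd : f ∣ φ.evalVec p) :
    ∃ r : ι → K[X], (∀ i, (r i).natDegree < f.natDegree) ∧ (¬ ∀ i, f ∣ r i) ∧
      f ∣ φ.evalVec r := by
  have hf1 : f ≠ 1 := by rintro rfl; exact hp fun i => one_dvd _
  have hsub : ∀ i, p i - p i %ₘ f = f * (p i /ₘ f) := fun i =>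
    sub_eq_of_eq_add' (modByMonic_add_div (p i) f).symm
  have hmod : ∀ i, f ∣ p i %ₘ f ↔ f ∣ p i := fun i => by
    conv_rhs => rw [← modByMonic_add_div (p i) f]
    exact (dvd_add_left (dvd_mul_right _ _)).symm
  refine ⟨fun i => p i %ₘ f, fun i => natDegree_modByMonic_lt _ hf hf1, ?_, ?_⟩
  · simpa only [hmod] using hp
  · have := φ.evalVec_sub_mem (I := Ideal.span {f}) (x := p) (y := fun i => p i %ₘ f)
      fun i => Ideal.mem_span_singleton.2 ⟨_, hsub i⟩
    exact (dvd_sub_right hdvd).1 (Ideal.mem_span_singleton.1 this)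

theorem exists_primitive_natDegree_lt_dvd_evalVec {f : K[X]} (hf : f.Monic) (hfp : Prime f)
    {p : ι → K[X]} (hp : ¬ ∀ i, f ∣ p i) (hdvd : f ∣ φ.evalVec p) :
    ∃ s : ι → K[X], (∀ q, (∀ i, q ∣ s i) → IsUnit q) ∧ (∀ i, (s i).natDegree < f.natDegree) ∧
      f ∣ φ.evalVec s := by
  classical
  obtain ⟨r, hrdeg, hr, hrdvd⟩ := φ.exists_natDegree_lt_dvd_evalVec hf hp hdvd
  obtain ⟨c, s, hc, rfl, hs, hsdvd⟩ := φ.exists_primitive_of_prime_dvd_evalVec hfp hr hrdvd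
  refine ⟨s, hs, fun i => lt_of_le_of_lt ?_ (hrdeg i), hsdvd⟩
  by_cases hsi : s i = 0
  · simp [hsi]
  · simp [natDegree_mul hc hsi]

theorem algebraMap_mem_DpowLe_of_dvd_evalVec (hφ : φ.Anisotropic) {f : K[X]} (hmonic : f.Monic)
    (hf : Irreducible f) {p : ι → K[X]} (hp : ¬ ∀ i, f ∣ p i) (hdvd : f ∣ φ.evalVec p) :
    algebraMap K[X] (FractionRing K[X]) f ∈
      DpowLe (φ.baseChange (FractionRing K[X])) f.natDegree := by
  induction hN : f.natDegree using Nat.strong_induction_on generalizing f p with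
  | _ N IH =>
  subst hN
  obtain ⟨s, hs, hsdeg, hfs⟩ :=
    φ.exists_primitive_natDegree_lt_dvd_evalVec hmonic hf.prime hp hdvd
  have hs0 : s ≠ 0 := fun h0 => not_isUnit_X (hs X fun i => h0 ▸ dvd_zero X)
  obtain ⟨i, hdeg, hlc⟩ := φ.exists_natDegree_evalVec_eq hφ hs0
  have hE0 : φ.evalVec s ≠ 0 := leadingCoeff_ne_zero.1 hlc.1
  obtain ⟨g, hg, hfg, hgdeg⟩ := hmonic.exists_monic_eq_mul_C_leadingCoeff_mul hfs hE0
  have hdeg_lt : g.natDegree + 2 ≤ f.natDegree := by have := hsdeg i; omega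
  set F := FractionRing K[X]
  have hgF : algebraMap K[X] F g ∈ DpowLe (φ.baseChange F) g.natDegree := by
    refine hg.map_mem_DpowLe_of_irreducible (algebraMap K[X] F : K[X] →* F) fun q hq hqirr hqg =>
      IH _ ?_ hq hqirr (fun hall => hqirr.not_isUnit (hs q hall))
        (hqg.trans (Dvd.intro_left _ hfg.symm)) rfl
    have := natDegree_le_of_dvd hqg hg.ne_zero
    omega
  have hEF : algebraMap K[X] F (φ.evalVec s) ∈ Dv (φ.baseChange F) :=
    φ.map_evalVec_mem_Dv (IsScalarTower.toAlgHom K K[X] F)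
      ((map_ne_zero_iff _ (IsFractionRing.injective K[X] F)).2 hE0)
  rw [hfg, map_mul, map_mul, ← algebraMap_eq, ← IsScalarTower.algebraMap_apply] at hEF
  exact DpowLe_mono (by omega)
    (mem_DpowLe_of_mul_mul_mem_Dv hEF (algebraMap_mem_Dv_baseChange hlc) hgF)

end QuadraticForm

/-- if a monic irreducible `f ∈ K[X]` divides a value `φ(p₁,…,pₙ)` with the
`pᵢ` not all divisible by `f`, then `f` is a product of at most `deg f` values of `φ`
over `K(X)`. -/
theorem stmt_7 {K : Type*} [Field K] [Invertible (2 : K)] {n : ℕ}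
    (φ : QuadraticForm K (Fin n → K)) (haniso : φ.Anisotropic)
    (f : Polynomial K) (hmonic : f.Monic) (hf : Irreducible f)
    (h : ∃ p : Fin n → Polynomial K,
      (¬ ∀ i, f ∣ p i) ∧
      f ∣ (φ.baseChange (Polynomial K)) (∑ i, p i ⊗ₜ[K] Pi.single i 1)) :
    ∃ k ≤ f.natDegree,
      algebraMap (Polynomial K) (FractionRing (Polynomial K)) f ∈
        Dpow (φ.baseChange (FractionRing (Polynomial K))) k := by
  obtain ⟨p, hp, hdvd⟩ := h
  exact φ.algebraMap_mem_DpowLe_of_dvd_evalVec haniso hmonic hf hp hdvd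

end
end

section
/- Let φ be an anisotropic quadratic form over K. If an element a ∈ K* can be written as a product of m values represented by φ over the Laurent series field K((Y)), then a can be written as a product of m values represented by φ over K itself. -/
open scoped TensorProduct

noncomputable section

/-- The Laurent series field `K((Y))`, as a field extension of `K`. -/
def LS (K : Type*) [Field K] : Type _ := LaurentSeries K

noncomputable instance (K : Type*) [Field K] : Field (LS K) :=
  inferInstanceAs (Field (LaurentSeries K))

noncomputable instance (K : Type*) [Field K] : Algebra K (LS K) :=
  inferInstanceAs (Algebra K (LaurentSeries K))

/-!
The leading coefficient `K((Y))ˣ → Kˣ` is multiplicative and is the identity on `K`, so it is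
enough that it maps `D_{K((Y))}(φ)` into `D_K(φ)`. A vector over `K((Y))` is `Y^d` times a vector
with power series coordinates, not all divisible by `Y`; its value is `Y^{2d}` times a power series
with constant term `φ(x)`, where `x ≠ 0` is the vector of constant terms. Anisotropy makes `φ(x)`
nonzero, so it is the leading coefficient.
-/

open scoped LaurentSeries PowerSeries
open HahnSeries

namespace HahnSeries

variable {Γ R : Type*} [AddCommMonoid Γ] [LinearOrder Γ] [IsOrderedCancelAddMonoid Γ]
  [Semiring R] [NoZeroDivisors R]

def leadingCoeffHom : HahnSeries Γ R →* R where
  toFun := leadingCoeff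
  map_one' := leadingCoeff_one
  map_mul' x y := leadingCoeff_mul x y

end HahnSeries

namespace QuadraticForm

variable {R V A B ι : Type*} [CommRing R] [Invertible (2 : R)] [AddCommGroup V] [Module R V]
  [CommRing A] [Algebra R A] [CommRing B] [Algebra R B] [Fintype ι]
  (Q : QuadraticForm R V) (b : Module.Basis ι R V)

theorem baseChange_sum_smul_basis_baseChange (g : ι → A) :
    Q.baseChange A (∑ i, g i • b.baseChange A i) =
      ∑ i, ∑ j, algebraMap R A (QuadraticMap.associated Q (b i) (b j)) * (g i * g j) := by
  let : Invertible (2 : A) := (Invertible.map (algebraMap R A) 2).copy 2 (map_ofNat _ _).symm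
  simp only [Module.Basis.baseChange_apply, TensorProduct.smul_tmul', smul_eq_mul, mul_one]
  rw [← QuadraticMap.associated_eq_self_apply A, associated_baseChange]
  simp only [map_sum, LinearMap.coe_sum, Finset.sum_apply, LinearMap.BilinForm.baseChange_tmul,
    Algebra.smul_def]
  rw [Finset.sum_comm]

theorem map_baseChange_sum_smul_basis_baseChange (f : A →ₐ[R] B) (g : ι → A) :
    f (Q.baseChange A (∑ i, g i • b.baseChange A i)) =
      Q.baseChange B (∑ i, f (g i) • b.baseChange B i) := by
  simp only [baseChange_sum_smul_basis_baseChange, map_sum, map_mul, AlgHom.commutes]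

theorem baseChange_self_sum_smul_basis_baseChange (x : ι → R) :
    Q.baseChange R (∑ i, x i • b.baseChange R i) = Q (∑ i, x i • b i) := by
  have : Q.baseChange R = Q.comp (TensorProduct.lid R V).toLinearMap := by
    ext m
    simp
  simp [this]

end QuadraticForm

namespace LaurentSeries

variable {R : Type*} [Semiring R]

theorem leadingCoeff_ofPowerSeries {r : R⟦X⟧} (hr : PowerSeries.constantCoeff r ≠ 0) :
    (ofPowerSeries ℤ R r).leadingCoeff = PowerSeries.constantCoeff r := by
  have hcoeff : (ofPowerSeries ℤ R r).coeff 0 = PowerSeries.constantCoeff r := by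
    simpa using coeff_coe_powerSeries r 0
  have hne : ofPowerSeries ℤ R r ≠ 0 := fun h => hr (by simp [← hcoeff, h])
  have horder : (ofPowerSeries ℤ R r).order = 0 := by
    refine le_antisymm (order_le_of_coeff_ne_zero (hcoeff ▸ hr)) ?_
    refine (le_order_iff_forall hne).2 fun j hj => ?_
    rw [PowerSeries.coeff_coe, if_pos hj]
  rw [leadingCoeff_eq, horder, hcoeff]

theorem exists_eq_single_mul_ofPowerSeries {ι : Type*} [Fintype ι] {g : ι → R⸨X⸩} (hg : g ≠ 0) :
    ∃ (d : ℤ) (p : ι → R⟦X⟧), (∀ i, g i = single d 1 * ofPowerSeries ℤ R (p i)) ∧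
      ∃ i, PowerSeries.constantCoeff (p i) ≠ 0 := by
  classical
  obtain ⟨i₀, hi₀, hmin⟩ := (Finset.univ.filter fun i => g i ≠ 0).exists_min_image
    (fun i => (g i).order) (by simpa [Finset.Nonempty, funext_iff] using hg)
  simp only [Finset.mem_filter, Finset.mem_univ, true_and] at hi₀ hmin
  refine ⟨(g i₀).order,
    fun i => PowerSeries.X ^ ((g i).order - (g i₀).order).toNat * (g i).powerSeriesPart,
    fun i => ?_, i₀, ?_⟩
  · by_cases hi : g i = 0
    · simp [hi]
    rw [map_mul, ofPowerSeries_X_pow, ← mul_assoc, single_mul_single, one_mul,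
      Int.toNat_of_nonneg (sub_nonneg.2 (hmin i hi)), add_sub_cancel,
      single_order_mul_powerSeriesPart]
  · simpa [← PowerSeries.coeff_zero_eq_constantCoeff_apply] using hi₀

end LaurentSeries

theorem QuadraticMap.Anisotropic.leadingCoeff_mem_Dv
    {K V : Type*} [Field K] [Invertible (2 : K)] [AddCommGroup V] [Module K V]
    [FiniteDimensional K V] {Q : QuadraticForm K V} (hQ : Q.Anisotropic) {c : K⸨X⸩}
    (hc : c ∈ Dv (Q.baseChange K⸨X⸩)) : c.leadingCoeff ∈ Dv Q := by
  obtain ⟨hc0, w, rfl⟩ := hc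
  refine ⟨leadingCoeff_ne_zero.2 hc0, ?_⟩
  let b := Module.finBasis K V
  let g := (b.baseChange K⸨X⸩).repr w
  have hw : w = ∑ i, g i • b.baseChange K⸨X⸩ i := ((b.baseChange K⸨X⸩).sum_repr w).symm
  have hg : (g : _ → K⸨X⸩) ≠ 0 := fun h => hc0 (by simp [hw, h])
  obtain ⟨d, p, hgp, i₀, hi₀⟩ := LaurentSeries.exists_eq_single_mul_ofPowerSeries hg
  let ε : K⟦X⟧ →ₐ[K] K := { PowerSeries.constantCoeff with commutes' := fun _ => by simp }
  let r := Q.baseChange K⟦X⟧ (∑ i, p i • b.baseChange K⟦X⟧ i)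
  have hr : PowerSeries.constantCoeff r = Q (∑ i, ε (p i) • b i) := by
    rw [← Q.baseChange_self_sum_smul_basis_baseChange]
    exact Q.map_baseChange_sum_smul_basis_baseChange b ε p
  have hv : ∑ i, ε (p i) • b i ≠ 0 := fun h =>
    hi₀ (Fintype.linearIndependent_iff.1 b.linearIndependent _ h i₀)
  have hvalue : Q.baseChange K⸨X⸩ w = single d 1 * single d 1 * ofPowerSeries ℤ K r := by
    let coe : K⟦X⟧ →ₐ[K] K⸨X⸩ := { ofPowerSeries ℤ K with commutes' := fun _ => rfl }
    have hscale : w = single d (1 : K) • ∑ i, coe (p i) • b.baseChange K⸨X⸩ i := by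
      simp only [hw, hgp, Finset.smul_sum, smul_smul]
      rfl
    rw [hscale, QuadraticMap.map_smul, smul_eq_mul]
    exact congrArg _ (Q.map_baseChange_sum_smul_basis_baseChange b coe p).symm
  have hr0 : PowerSeries.constantCoeff r ≠ 0 := hr ▸ fun h => hv (hQ _ h)
  refine ⟨∑ i, ε (p i) • b i, Eq.symm ?_⟩
  rw [hvalue, leadingCoeff_mul, leadingCoeff_mul, leadingCoeff_of_single, one_mul, one_mul,
    LaurentSeries.leadingCoeff_ofPowerSeries hr0, hr]

theorem stmt_10_general {K : Type*} [Field K] [Invertible (2 : K)] {n : ℕ}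
    (φ : QuadraticForm K (Fin n → K)) (haniso : φ.Anisotropic)
    (m : ℕ) (a : K)
    (ha : algebraMap K (LS K) a ∈ Dpow (φ.baseChange (LS K)) m) :
    a ∈ Dpow φ m := by
  obtain ⟨c, hc, hprod⟩ : algebraMap K K⸨X⸩ a ∈ Dpow (φ.baseChange K⸨X⸩) m := ha
  refine ⟨fun i => (c i).leadingCoeff, fun i => haniso.leadingCoeff_mem_Dv (hc i), ?_⟩
  calc a = leadingCoeffHom (algebraMap K K⸨X⸩ a) := by simp [leadingCoeffHom, algebraMap_apply']
    _ = ∏ i, (c i).leadingCoeff := by rw [hprod, map_prod]; rfl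

/-- `D_{K((Y))}(φ)^m ∩ K* ⊆ D_K(φ)^m` for anisotropic `φ`. -/
theorem stmt_10 {K : Type*} [Field K] [Invertible (2 : K)] {n : ℕ}
    (φ : QuadraticForm K (Fin n → K)) (haniso : φ.Anisotropic)
    (m : ℕ) (a : K) (ha0 : a ≠ 0)
    (ha : algebraMap K (LS K) a ∈ Dpow (φ.baseChange (LS K)) m) :
    a ∈ Dpow φ m :=
  stmt_10_general φ haniso m a ha

end
end
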